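/- arXiv:1910.12884 — 5 statements merged into one kernel-verified Lean document; each statement's English description precedes it below -/
import Mathlib

section
/- Let P^target(b,c|x',z) be any bipartite non-signaling behavior with binary inputs and outputs, and define P^initial(a,b,c|x,y,z) := (1/2)·P^target(b,c|x⊕a⊕y,z). Then P^initial admits a local-hidden-variable decomposition across the bipartition AB|C: writing λ = (λ₀,λ₁) ∈ {0,1}², set P_λ := (1/2)·∑_c P^target(λ₀,c|λ₁,z) (which is independent of z by no-signaling), P(a,b|x,y;λ) := δ_{λ₀,b}·δ_{λ₁, x⊕a⊕y}, and P(c|z;λ) := P^target(λ₀,c|λ₁,z)/∑_{c'} P^target(λ₀,c'|λ₁,z) (when the denominator is nonzero). Then P^initial(a,b,c|x,y,z) = ∑_λ P_λ · P(a,b|x,y;λ) · P(c|z;λ) for all a,b,c,x,y,z. -/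
open Finset

/-- For a non-signaling target behavior, the initial behavior
`P^initial(a,b,c|x,y,z) = (1/2)·P^target(b,c|x⊕a⊕y,z)` admits an LHV decomposition
across `AB|C` with hidden variable `λ = (λ₀,λ₁) ∈ {0,1}²`. -/
theorem stmt_1
    (Ptarget : Fin 2 → Fin 2 → Fin 2 → Fin 2 → ℝ)  -- P^target b c x' z
    (hpos : ∀ b c x z, 0 ≤ Ptarget b c x z)
    (hnorm : ∀ x z, ∑ b : Fin 2, ∑ c : Fin 2, Ptarget b c x z = 1)
    -- non-signaling: Charlie's marginal independent of x', Bob's marginal independent of z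
    (hNSb : ∀ c x x' z, ∑ b : Fin 2, Ptarget b c x z = ∑ b : Fin 2, Ptarget b c x' z)
    (hNSc : ∀ b x z z', ∑ c : Fin 2, Ptarget b c x z = ∑ c : Fin 2, Ptarget b c x z') :
    ∀ a b c x y z : Fin 2,
      (1 / 2 : ℝ) * Ptarget b c (x + a + y) z =
        ∑ l0 : Fin 2, ∑ l1 : Fin 2,
          -- P_λ
          ((1 / 2 : ℝ) * ∑ c' : Fin 2, Ptarget l0 c' l1 0) *
          -- P(a,b|x,y;λ) = δ_{λ₀,b} δ_{λ₁,x⊕a⊕y}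
          ((if l0 = b then (1 : ℝ) else 0) * (if l1 = x + a + y then (1 : ℝ) else 0)) *
          -- P(c|z;λ)
          (Ptarget l0 c l1 z / ∑ c' : Fin 2, Ptarget l0 c' l1 z) := by
  intro a b c x y z
  have key : ∀ l0 l1 : Fin 2,
      ((1 / 2 : ℝ) * ∑ c' : Fin 2, Ptarget l0 c' l1 0) *
      ((if l0 = b then (1 : ℝ) else 0) * (if l1 = x + a + y then (1 : ℝ) else 0)) *
      (Ptarget l0 c l1 z / ∑ c' : Fin 2, Ptarget l0 c' l1 z) =
      (if l0 = b ∧ l1 = x + a + y then (1 / 2 : ℝ) * Ptarget b c (x + a + y) z else 0) := by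
    intro l0 l1
    by_cases h1 : l0 = b
    · by_cases h2 : l1 = x + a + y
      · rw [h1, h2]
        simp only [if_pos rfl, and_self, if_true]
        rw [hNSc b (x + a + y) 0 z]
        set S : ℝ := ∑ c' : Fin 2, Ptarget b c' (x + a + y) z with hS
        by_cases hz : S = 0
        · have hle : Ptarget b c (x + a + y) z ≤ ∑ c' : Fin 2, Ptarget b c' (x + a + y) z :=
            Finset.single_le_sum (fun i _ => hpos b i (x + a + y) z) (mem_univ c)
          have : Ptarget b c (x + a + y) z = 0 :=
            le_antisymm (hz ▸ hle) (hpos b c (x + a + y) z)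
          simp [hz, this]
        · field_simp
      · simp [h1, h2]
    · simp [h1]
  rw [Finset.sum_congr rfl (fun l0 _ => Finset.sum_congr rfl (fun l1 _ => key l0 l1))]
  simp [Fin.sum_univ_two]
  rcases Fin.exists_fin_two.mp ⟨b, rfl⟩ with h | h <;>
    rcases Fin.exists_fin_two.mp ⟨x + a + y, rfl⟩ with h2 | h2 <;>
    simp [h, h2]
end

section
/- Let σ be a tripartite assemblage with binary inputs x,y and binary outputs a,b, assigning to each (a,b,x,y) a positive semidefinite 2×2 matrix σ_{a,b|x,y}, admitting an LHS decomposition σ_{a,b|x,y} = ∑_λ P_λ · P(a,b|x,y,λ) · ϱ_λ where each P(·,·|·,·,λ) is a non-signaling bipartite conditional distribution, P_λ a probability distribution, and ϱ_λ density matrices. Then the wired assemblage σ^wired_{b|x} := ∑_a σ_{a,b|x,a} admits an LHS decomposition: σ^wired_{b|x} = ∑_λ P_λ · Q(b|x,λ) · ϱ_λ where Q(b|x,λ) := ∑_a P(a,b|x,a,λ) is a valid conditional probability distribution (nonnegative and ∑_b Q(b|x,λ) = 1 for all x,λ). -/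
open Finset
open scoped ComplexOrder

/-- If a tripartite assemblage admits an LHS decomposition with
non-signaling λ-behaviors, then the wired assemblage `σ^wired_{b|x} := ∑_a σ_{a,b|x,a}`
admits an LHS decomposition with `Q(b|x,λ) := ∑_a P(a,b|x,a,λ)` a valid conditional
probability distribution. -/
theorem stmt_3 {ι : Type*} [Fintype ι]
    (σ : Fin 2 → Fin 2 → Fin 2 → Fin 2 → Matrix (Fin 2) (Fin 2) ℂ)  -- σ a b x y
    (hσ : ∀ a b x y, (σ a b x y).PosSemidef)
    (Pl : ι → ℝ) (hPl : ∀ l, 0 ≤ Pl l) (hPl1 : ∑ l, Pl l = 1)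
    (P : Fin 2 → Fin 2 → Fin 2 → Fin 2 → ι → ℝ)  -- P a b x y λ
    (hP : ∀ a b x y l, 0 ≤ P a b x y l)
    (hP1 : ∀ x y l, ∑ a : Fin 2, ∑ b : Fin 2, P a b x y l = 1)
    -- non-signaling of each λ-behavior: A→B and B→A
    (hNSA : ∀ b x x' y l, ∑ a : Fin 2, P a b x y l = ∑ a : Fin 2, P a b x' y l)
    (hNSB : ∀ a x y y' l, ∑ b : Fin 2, P a b x y l = ∑ b : Fin 2, P a b x y' l)
    (ρ : ι → Matrix (Fin 2) (Fin 2) ℂ)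
    (hρ : ∀ l, (ρ l).PosSemidef ∧ (ρ l).trace = 1)
    (hdecomp : ∀ a b x y, σ a b x y = ∑ l, ((Pl l * P a b x y l : ℝ) : ℂ) • ρ l) :
    (∀ b x l, 0 ≤ ∑ a : Fin 2, P a b x a l) ∧
    (∀ x l, ∑ b : Fin 2, ∑ a : Fin 2, P a b x a l = 1) ∧
    (∀ b x, ∑ a : Fin 2, σ a b x a =
        ∑ l, ((Pl l * ∑ a : Fin 2, P a b x a l : ℝ) : ℂ) • ρ l) := by
  refine ⟨fun b x l => Finset.sum_nonneg fun a _ => hP a b x a l, fun x l => ?_, fun b x => ?_⟩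
  · rw [Finset.sum_comm]
    calc ∑ a : Fin 2, ∑ b : Fin 2, P a b x a l
        = ∑ a : Fin 2, ∑ b : Fin 2, P a b x x l := by
          refine Finset.sum_congr rfl fun a _ => hNSB a x a x l
      _ = 1 := hP1 x x l
  · simp only [hdecomp]
    rw [Finset.sum_comm]
    refine Finset.sum_congr rfl fun l _ => ?_
    rw [← Finset.sum_smul]
    congr 1
    push_cast
    rw [Finset.mul_sum]
end

section
/- The assemblage σ^GHZ_{a,b|x,y} := (1/8)·(𝟙 + ((-1)^b/√2)·(Z + x·(-1)^{a+y}·X)) admits the LHS decomposition σ^GHZ_{a,b|x,y} = ∑_{λ∈{0,1}²} P_λ · P(a,b|x,y;λ) · ϱ_λ, where λ=(λ₀,λ₁), P_λ = 1/4, ϱ_λ = 𝟙/2 + ((-1)^{λ₀}/(2√2))·(Z + (-1)^{λ₁}X), and P(a,b|x,y;λ) = δ_{λ₀,b}·(1 + x·(-1)^{a+y+λ₁})/2. In particular, each ϱ_λ is a valid density matrix (positive semidefinite with trace 1), each P(·,·|x,y;λ) is a valid conditional probability distribution, and the decomposition identity holds for all bits a,b,x,y. -/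
open Finset
open scoped ComplexOrder

noncomputable section

def PauliZ : Matrix (Fin 2) (Fin 2) ℂ := !![1, 0; 0, -1]
def PauliX : Matrix (Fin 2) (Fin 2) ℂ := !![0, 1; 1, 0]

/-- The GHZ-derived assemblage σ^GHZ_{a,b|x,y}. -/
noncomputable def σGHZ (a b x y : Fin 2) : Matrix (Fin 2) (Fin 2) ℂ :=
  (1 / 8 : ℂ) •
    ((1 : Matrix (Fin 2) (Fin 2) ℂ) +
      ((-1 : ℂ) ^ (b : ℕ) / (Real.sqrt 2 : ℂ)) •
        (PauliZ + (((x : ℕ) : ℂ) * (-1 : ℂ) ^ ((a : ℕ) + (y : ℕ))) • PauliX))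

/-- The hidden states ϱ_λ, λ = (λ₀,λ₁). -/
noncomputable def hiddenState (l0 l1 : Fin 2) : Matrix (Fin 2) (Fin 2) ℂ :=
  (1 / 2 : ℂ) • (1 : Matrix (Fin 2) (Fin 2) ℂ) +
    ((-1 : ℂ) ^ (l0 : ℕ) / (2 * (Real.sqrt 2 : ℂ))) •
      (PauliZ + ((-1 : ℂ) ^ (l1 : ℕ)) • PauliX)

/-- The λ-dependent behaviors P(a,b|x,y;λ) = δ_{λ₀,b}·(1 + x·(-1)^{a+y+λ₁})/2. -/
noncomputable def Plam (a b x y l0 l1 : Fin 2) : ℝ :=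
  (if l0 = b then (1 : ℝ) else 0) *
    ((1 + ((x : ℕ) : ℝ) * (-1 : ℝ) ^ ((a : ℕ) + (y : ℕ) + (l1 : ℕ))) / 2)

lemma hs0' : (Real.sqrt 2 : ℂ) ≠ 0 :=
  Complex.ofReal_ne_zero.2 (by positivity)

lemma hs2' : (Real.sqrt 2 : ℂ) * (Real.sqrt 2 : ℂ) = 2 := by
  rw [← Complex.ofReal_mul]; norm_num [Real.mul_self_sqrt]

set_option maxHeartbeats 1600000 in
lemma key' (l0 l1 : Fin 2) :
    hiddenState l0 l1 = (hiddenState l0 l1).conjTranspose * hiddenState l0 l1 := by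
  have h2 := hs2'
  have h0 := hs0'
  have hstar : star (Real.sqrt 2 : ℂ) = (Real.sqrt 2 : ℂ) := by
    rw [Complex.star_def, Complex.conj_ofReal]
  ext i j
  fin_cases l0 <;> fin_cases l1 <;> fin_cases i <;> fin_cases j <;>
    · simp only [hiddenState, PauliZ, PauliX, Matrix.mul_apply, Fin.sum_univ_two,
        Matrix.conjTranspose_apply, Matrix.add_apply, Matrix.smul_apply,
        Matrix.one_apply, Matrix.cons_val', Matrix.cons_val_zero, Matrix.cons_val_one,
        Matrix.head_cons, Matrix.head_fin_const, Matrix.empty_val', Matrix.cons_val_fin_one,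
        star_add, star_mul', star_div₀, star_smul, smul_eq_mul, star_one, star_neg,
        star_ofNat, star_pow, hstar, Fin.isValue]
      norm_num
      field_simp
      first
        | ring1
        | linear_combination (-2 * (Real.sqrt 2:ℂ)) * h2
        | linear_combination (2 * (Real.sqrt 2:ℂ)) * h2
        | linear_combination ((Real.sqrt 2:ℂ)) * h2
        | linear_combination (-(Real.sqrt 2:ℂ)) * h2
        | linear_combination h2
        | linear_combination -h2

set_option maxHeartbeats 1600000 in
/-- σ^GHZ admits the stated LHS decomposition with weights P_λ = 1/4,
valid hidden density matrices ϱ_λ and valid conditional distributions P(a,b|x,y;λ). -/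
theorem stmt_5 :
    (∀ l0 l1 : Fin 2, (hiddenState l0 l1).PosSemidef ∧ (hiddenState l0 l1).trace = 1) ∧
    (∀ a b x y l0 l1 : Fin 2, 0 ≤ Plam a b x y l0 l1) ∧
    (∀ x y l0 l1 : Fin 2, ∑ a : Fin 2, ∑ b : Fin 2, Plam a b x y l0 l1 = 1) ∧
    (∑ l0 : Fin 2, ∑ l1 : Fin 2, (1 / 4 : ℝ) = 1) ∧
    (∀ a b x y : Fin 2,
        σGHZ a b x y =
          ∑ l0 : Fin 2, ∑ l1 : Fin 2,
            (((1 / 4 : ℝ) * Plam a b x y l0 l1 : ℝ) : ℂ) • hiddenState l0 l1) := by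
  have h0 := hs0'
  refine ⟨fun l0 l1 => ⟨?_, ?_⟩, ?_, ?_, ?_, ?_⟩
  · have h := Matrix.posSemidef_conjTranspose_mul_self (hiddenState l0 l1)
    rwa [← key' l0 l1] at h
  · fin_cases l0 <;> fin_cases l1 <;>
      · simp [Matrix.trace_fin_two, hiddenState, PauliZ, PauliX, Matrix.one_apply]
  · intro a b x y l0 l1
    fin_cases a <;> fin_cases b <;> fin_cases x <;> fin_cases y <;>
      fin_cases l0 <;> fin_cases l1 <;> norm_num [Plam]
  · intro x y l0 l1
    fin_cases x <;> fin_cases y <;> fin_cases l0 <;> fin_cases l1 <;>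
      norm_num [Plam, Fin.sum_univ_two]
  · norm_num [Fin.sum_univ_two]
  · intro a b x y
    ext i j
    fin_cases b <;> fin_cases i <;> fin_cases j <;>
      · simp only [σGHZ, hiddenState, Plam, PauliZ, PauliX, Matrix.sum_apply,
          Fin.sum_univ_two, Matrix.add_apply, Matrix.smul_apply, Matrix.one_apply,
          Matrix.cons_val', Matrix.cons_val_zero, Matrix.cons_val_one, Matrix.head_cons,
          Matrix.head_fin_const, Matrix.empty_val', Matrix.cons_val_fin_one,
          smul_eq_mul, Complex.ofReal_mul, Complex.ofReal_div, Complex.ofReal_add,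
          Complex.ofReal_one, Complex.ofReal_pow, Complex.ofReal_neg,
          Complex.ofReal_natCast, Complex.ofReal_ofNat, Complex.ofReal_zero,
          Fin.val_zero, Fin.val_one, apply_ite (Complex.ofReal), pow_add, pow_zero, pow_one,
          Fin.isValue, if_true, if_false, mul_zero, zero_mul, add_zero, zero_add, mul_one, one_mul]
        norm_num
        generalize (-1 : ℂ) ^ ((a : ℕ) + (y : ℕ)) = c
        field_simp
        ring1

end
end

section
/- Let σ^target_{b|x'} be any bipartite assemblage with binary input and output (positive semidefinite matrices, ∑_b σ^target_{b|x'} = ϱ independent of x', Tr ϱ = 1). Then σ^initial_{a,b|x,y} := (1/2)σ^target_{b|x⊕a⊕y} admits the LHS decomposition σ^initial_{a,b|x,y} = ∑_{λ=(λ₀,λ₁)∈{0,1}²} P_λ · P(a,b|x,y;λ) · ϱ_λ with P_λ := (1/2)Tr[σ^target_{λ₀|λ₁}], ϱ_λ := σ^target_{λ₀|λ₁}/Tr[σ^target_{λ₀|λ₁}] (when the trace is nonzero), and P(a,b|x,y;λ) := δ_{λ₀,b}·δ_{λ₁,x⊕a⊕y}. In particular ∑_λ P_λ = 1, each P(·,·|x,y;λ)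 is a valid conditional probability distribution, and the matrix identity holds for all a,b,x,y. -/
open Finset
open scoped ComplexOrder

lemma psd_key {d : ℕ} {M : Matrix (Fin d) (Fin d) ℂ} (h : M.PosSemidef) :
    M.trace = (M.trace.re : ℂ) ∧ 0 ≤ M.trace.re ∧ (M.trace = 0 → M = 0) := by
  obtain ⟨B, rfl⟩ : ∃ B : Matrix (Fin d) (Fin d) ℂ, M = B.conjTranspose * B := by
    open scoped MatrixOrder Matrix.Norms.L2Operator in
    exact CStarAlgebra.nonneg_iff_eq_star_mul_self.mp h.nonneg
  have htr : (B.conjTranspose * B).trace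
      = ((∑ j : Fin d, ∑ k : Fin d, Complex.normSq (B k j) : ℝ) : ℂ) := by
    simp [Matrix.trace, Matrix.diag, Matrix.mul_apply, Matrix.conjTranspose_apply,
      Complex.normSq_eq_conj_mul_self]
  have hnn : 0 ≤ ∑ j, ∑ k, Complex.normSq (B k j) := by
    refine Finset.sum_nonneg fun j _ => Finset.sum_nonneg fun k _ => Complex.normSq_nonneg _
  refine ⟨by rw [htr]; simp, by rw [htr]; simpa using hnn, fun h0 => ?_⟩
  rw [htr] at h0
  have hs : ∑ j, ∑ k, Complex.normSq (B k j) = 0 := by exact_mod_cast h0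
  have hB : B = 0 := by
    ext k j
    have h1 := (Finset.sum_eq_zero_iff_of_nonneg
      (fun j _ => Finset.sum_nonneg fun k _ => Complex.normSq_nonneg (B k j))).mp hs j
      (Finset.mem_univ _)
    have h2 := (Finset.sum_eq_zero_iff_of_nonneg
      (fun k _ => Complex.normSq_nonneg (B k j))).mp h1 k (Finset.mem_univ _)
    simpa using Complex.normSq_eq_zero.mp h2
  rw [hB]; simp

/-- `σ^initial_{a,b|x,y} := (1/2)σ^target_{b|x⊕a⊕y}` admits the LHS
decomposition with `P_λ := (1/2)Tr[σ^target_{λ₀|λ₁}]`,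
`ϱ_λ := σ^target_{λ₀|λ₁}/Tr[σ^target_{λ₀|λ₁}]` and
`P(a,b|x,y;λ) := δ_{λ₀,b}·δ_{λ₁,x⊕a⊕y}`. -/
theorem stmt_13 {d : ℕ}
    (σt : Fin 2 → Fin 2 → Matrix (Fin d) (Fin d) ℂ)  -- σ^target b x'
    (hpsd : ∀ b x, (σt b x).PosSemidef)
    (hNS : ∀ x x' : Fin 2, ∑ b : Fin 2, σt b x = ∑ b : Fin 2, σt b x')
    (htr : ∀ x : Fin 2, (∑ b : Fin 2, σt b x).trace = 1) :
    -- the weights P_λ = (1/2)Tr[σ^target_{λ₀|λ₁}] sum to one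
    (∑ l0 : Fin 2, ∑ l1 : Fin 2, (1 / 2 : ℝ) * (σt l0 l1).trace.re = 1) ∧
    (∀ l0 l1 : Fin 2, 0 ≤ (1 / 2 : ℝ) * (σt l0 l1).trace.re) ∧
    -- each P(·,·|x,y;λ) is a valid conditional probability distribution
    (∀ a b x y l0 l1 : Fin 2,
        (0 : ℝ) ≤ (if l0 = b then (1 : ℝ) else 0) * (if l1 = x + a + y then 1 else 0)) ∧
    (∀ x y l0 l1 : Fin 2,
        ∑ a : Fin 2, ∑ b : Fin 2,
          (if l0 = b then (1 : ℝ) else 0) * (if l1 = x + a + y then (1 : ℝ) else 0) = 1) ∧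
    -- the matrix identity of the LHS decomposition
    (∀ a b x y : Fin 2,
        (1 / 2 : ℂ) • σt b (x + a + y) =
          ∑ l0 : Fin 2, ∑ l1 : Fin 2,
            ((((1 / 2 : ℝ) * (σt l0 l1).trace.re *
                ((if l0 = b then (1 : ℝ) else 0) *
                  (if l1 = x + a + y then (1 : ℝ) else 0))) : ℝ) : ℂ) •
              (((σt l0 l1).trace)⁻¹ • σt l0 l1)) := by
  have hsum : ∀ x : Fin 2, (σt 0 x).trace.re + (σt 1 x).trace.re = 1 := by
    intro x
    have h := htr x
    rw [Fin.sum_univ_two, Matrix.trace_add] at h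
    have := congrArg Complex.re h
    simpa using this
  refine ⟨?_, ?_, ?_, ?_, ?_⟩
  · rw [Finset.sum_comm]
    simp only [Fin.sum_univ_two]
    have h0 := hsum 0
    have h1 := hsum 1
    ring_nf
    linarith
  · intro l0 l1
    have := (psd_key (hpsd l0 l1)).2.1
    linarith
  · intro a b x y l0 l1
    apply mul_nonneg <;> split <;> norm_num
  · intro x y l0 l1
    fin_cases x <;> fin_cases y <;> fin_cases l0 <;> fin_cases l1 <;>
      simp [Fin.sum_univ_two] <;> decide
  · intro a b x y
    set z := x + a + y with hz
    rw [Finset.sum_eq_single b, Finset.sum_eq_single z]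
    · simp only [if_pos rfl, mul_one]
      obtain ⟨hre, hnn, hz0⟩ := psd_key (hpsd b z)
      rcases eq_or_ne (σt b z).trace 0 with h0 | h0
      · rw [hz0 h0]; simp
      · rw [smul_smul]
        congr 1
        push_cast
        rw [← hre]
        field_simp
    · intro c _ hc
      simp [if_neg hc]
    · intro h; exact absurd (Finset.mem_univ z) h
    · intro c _ hc
      simp [if_neg hc]
    · intro h; exact absurd (Finset.mem_univ b) h
end

section
/- If a tripartite assemblage σ_{a,b|x,y} admits a time-ordered LHS decomposition from A to B, i.e. σ_{a,b|x,y} = ∑_λ P_λ P^{A→B}(a,b|x,y,λ) ϱ_λ where each P^{A→B}(·|·,λ) is non-signaling from Bob to Alice (∑_b P^{A→B}(a,b|x,y,λ) is independent of y for all a,x,λ), then the assemblage obtained by the wiring y=a, namely σ^wired_{b|x} := ∑_a σ_{a,b|x,a}, is unsteerable: it admits a decomposition σ^wired_{b|x} = ∑_λ P_λ Q(b|x,λ) ϱ_λ with each Q(·|x,λ) a valid probability distribution. -/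
open Finset
open scoped ComplexOrder

/-- If a tripartite assemblage admits a time-ordered LHS decomposition from
A to B (each λ-behavior non-signaling from Bob to Alice), then the wired assemblage
`σ^wired_{b|x} := ∑_a σ_{a,b|x,a}` is unsteerable, with `Q(b|x,λ) := ∑_a P(a,b|x,a,λ)`
a valid conditional distribution. -/
theorem stmt_14 {ι : Type*} [Fintype ι]
    (σ : Fin 2 → Fin 2 → Fin 2 → Fin 2 → Matrix (Fin 2) (Fin 2) ℂ)  -- σ a b x y
    (hσ : ∀ a b x y, (σ a b x y).PosSemidef)
    (Pl : ι → ℝ) (hPl : ∀ l, 0 ≤ Pl l) (hPl1 : ∑ l, Pl l = 1)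
    (P : Fin 2 → Fin 2 → Fin 2 → Fin 2 → ι → ℝ)  -- P^{A→B} a b x y λ
    (hP : ∀ a b x y l, 0 ≤ P a b x y l)
    (hP1 : ∀ x y l, ∑ a : Fin 2, ∑ b : Fin 2, P a b x y l = 1)
    -- non-signaling from Bob to Alice: Alice's marginal is independent of y
    (hNSBA : ∀ a x y y' l, ∑ b : Fin 2, P a b x y l = ∑ b : Fin 2, P a b x y' l)
    (ρ : ι → Matrix (Fin 2) (Fin 2) ℂ)
    (hρ : ∀ l, (ρ l).PosSemidef ∧ (ρ l).trace = 1)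
    (hdecomp : ∀ a b x y, σ a b x y = ∑ l, ((Pl l * P a b x y l : ℝ) : ℂ) • ρ l) :
    (∀ b x l, 0 ≤ ∑ a : Fin 2, P a b x a l) ∧
    (∀ x l, ∑ b : Fin 2, ∑ a : Fin 2, P a b x a l = 1) ∧
    (∀ b x, ∑ a : Fin 2, σ a b x a =
        ∑ l, ((Pl l * ∑ a : Fin 2, P a b x a l : ℝ) : ℂ) • ρ l) := by
  refine ⟨fun b x l => Finset.sum_nonneg fun a _ => hP a b x a l, fun x l => ?_, fun b x => ?_⟩
  · rw [Finset.sum_comm]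
    calc ∑ a : Fin 2, ∑ b : Fin 2, P a b x a l
        = ∑ a : Fin 2, ∑ b : Fin 2, P a b x 0 l := by
          exact Finset.sum_congr rfl fun a _ => hNSBA a x a 0 l
      _ = 1 := hP1 x 0 l
  · simp only [hdecomp]
    rw [Finset.sum_comm]
    refine Finset.sum_congr rfl fun l _ => ?_
    rw [← Finset.sum_smul]
    congr 1
    push_cast
    rw [← Finset.mul_sum]
end
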